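/- Let (p_n)_{n ≥ 0} be a sequence of polynomial functions on a commutative ring R with p_0 = 1, satisfying the binomial-type identity p_n(u+v) = Σ_{i=0}^{n} C(n,i) p_i(u) p_{n−i}(v) for all u, v ∈ R and all n (the degree of p_n is not assumed to be n). Given a grid Z = (z_0, z_1, …) in R, define t_0(x;Z) = 1 and t_n(x;Z) = p_n(x) − Σ_{i=0}^{n−1} C(n,i) p_{n−i}(z_i) t_i(x;Z). Then for every η ∈ R, every x ∈ R, and every n ≥ 0, t_n(x+η; Z+η) = t_n(x; Z), where Z+η = (z_0+η, z_1+η, z_2+η, …). (Theorem 4.6, shift invariance of generalized Gončarov polynomials.) -/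

import Mathlib

/-!
The polynomials `t_i(·; Z)` are the unique coefficients in the expansion
`p_n(x) = ∑_{i ≤ n} C(n,i) p_{n-i}(z_i) t_i(x; Z)`, the top coefficient being `p_0(z_n) = 1`.
So it suffices to check that the values `t_i(x; Z)` also satisfy the expansion of `p_n(x + η)`
with respect to the shifted grid `Z + η`. Applying the binomial identity to `p_n(x + η)` and then
to each `p_{n-i}(z_i + η)` turns both sides into the same trinomial sum over `i + k + l = n`.
-/

open Finset

variable {R : Type*} [CommRing R]

/-- The generalized Gončarov polynomials associated with the sequence `p` and the grid `Z`,
via the recurrence `t_n(x; Z) = p_n(x) - ∑_{i<n} C(n,i) p_{n-i}(z_i) t_i(x; Z)`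
(with `t_0 = p_0 = 1`). -/
noncomputable def gonc {S : Type*} [CommRing S] (p : ℕ → S → S) (Z : ℕ → S) (n : ℕ) (x : S) : S :=
  p n x - ∑ i ∈ (Finset.range n).attach,
    (n.choose i.1 : S) * p (n - i.1) (Z i.1) * gonc p Z i.1 x
termination_by n
decreasing_by exact Finset.mem_range.mp i.2

theorem sum_range_choose_mul_choose_smul {M : Type*} [AddCommMonoid M] (n : ℕ)
    (f : ℕ → ℕ → ℕ → M) :
    ∑ j ∈ range (n + 1), ∑ i ∈ range (j + 1), (n.choose j * j.choose i) • f i (j - i) (n - j)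
      = ∑ i ∈ range (n + 1), ∑ k ∈ range (n - i + 1),
          (n.choose i * (n - i).choose k) • f i k (n - i - k) := by
  have hswap := sum_Ico_Ico_comm 0 (n + 1)
    fun i j => (n.choose j * j.choose i) • f i (j - i) (n - j)
  simp only [← range_eq_Ico] at hswap
  rw [← hswap]
  refine sum_congr rfl fun i hi => ?_
  have hin : i ≤ n := Nat.lt_succ_iff.mp (mem_range.mp hi)
  rw [sum_Ico_eq_sum_range, show n + 1 - i = n - i + 1 by omega]
  refine sum_congr rfl fun k _ => ?_
  rw [Nat.choose_mul (Nat.le_add_right i k), Nat.add_sub_cancel_left, Nat.sub_add_eq]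

section Gonc

variable {S : Type*} [CommRing S] (q : ℕ → S → S) (Z : ℕ → S)

theorem gonc_eq_sub_sum (n : ℕ) (x : S) :
    gonc q Z n x = q n x - ∑ i ∈ range n, (n.choose i : S) * q (n - i) (Z i) * gonc q Z i x := by
  rw [gonc, sum_attach (range n) fun i => (n.choose i : S) * q (n - i) (Z i) * gonc q Z i x]

variable {q}

theorem eq_sum_sub_of_expansion (hq0 : ∀ y, q 0 y = 1) {x : S} {s : ℕ → S} {n : ℕ}
    (hs : q n x = ∑ i ∈ range (n + 1), (n.choose i : S) * q (n - i) (Z i) * s i) :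
    s n = q n x - ∑ i ∈ range n, (n.choose i : S) * q (n - i) (Z i) * s i := by
  rw [hs, sum_range_succ, Nat.choose_self, Nat.sub_self, hq0]
  push_cast
  ring

theorem eval_eq_sum_gonc (hq0 : ∀ y, q 0 y = 1) (n : ℕ) (x : S) :
    q n x = ∑ i ∈ range (n + 1), (n.choose i : S) * q (n - i) (Z i) * gonc q Z i x := by
  rw [sum_range_succ, Nat.choose_self, Nat.sub_self, hq0, gonc_eq_sub_sum]
  push_cast
  ring

theorem gonc_eq_of_expansion (hq0 : ∀ y, q 0 y = 1) {x : S} {s : ℕ → S}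
    (hs : ∀ n, q n x = ∑ i ∈ range (n + 1), (n.choose i : S) * q (n - i) (Z i) * s i) (n : ℕ) :
    gonc q Z n x = s n := by
  induction n using Nat.strong_induction_on with
  | _ n ih =>
    rw [eq_sum_sub_of_expansion Z hq0 (hs n), gonc_eq_sub_sum]
    exact congrArg _ (sum_congr rfl fun i hi => by rw [ih i (mem_range.mp hi)])

theorem gonc_add_shift (hq0 : ∀ y, q 0 y = 1)
    (hbin : ∀ n u v, q n (u + v) = ∑ i ∈ range (n + 1), (n.choose i : S) * q i u * q (n - i) v)
    (η x : S) (n : ℕ) :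
    gonc q (fun i => Z i + η) n (x + η) = gonc q Z n x := by
  refine gonc_eq_of_expansion _ hq0 (s := fun i => gonc q Z i x) (fun m => ?_) n
  let term : ℕ → ℕ → ℕ → S := fun i k l => q k (Z i) * gonc q Z i x * q l η
  calc q m (x + η)
      = ∑ j ∈ range (m + 1), ∑ i ∈ range (j + 1),
          (m.choose j * j.choose i) • term i (j - i) (m - j) := by
        rw [hbin]
        refine sum_congr rfl fun j _ => ?_
        rw [eval_eq_sum_gonc Z hq0 j x, mul_sum, sum_mul]
        refine sum_congr rfl fun i _ => ?_
        simp only [term, nsmul_eq_mul, Nat.cast_mul]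
        ring
    _ = ∑ i ∈ range (m + 1), ∑ k ∈ range (m - i + 1),
          (m.choose i * (m - i).choose k) • term i k (m - i - k) :=
        sum_range_choose_mul_choose_smul m term
    _ = ∑ i ∈ range (m + 1), (m.choose i : S) * q (m - i) (Z i + η) * gonc q Z i x := by
        refine sum_congr rfl fun i _ => ?_
        rw [hbin, mul_sum, sum_mul]
        refine sum_congr rfl fun k _ => ?_
        simp only [term, nsmul_eq_mul, Nat.cast_mul]
        ring

end Gonc

theorem goncarov_shift_invariant (p : ℕ → Polynomial R)
    (hp0 : ∀ x : R, (p 0).eval x = 1)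
    (hbin : ∀ (n : ℕ) (u v : R),
      (p n).eval (u + v)
        = ∑ i ∈ Finset.range (n + 1), (n.choose i : R) * (p i).eval u * (p (n - i)).eval v)
    (Z : ℕ → R) (η : R) (x : R) (n : ℕ) :
    gonc (fun m t => (p m).eval t) (fun i => Z i + η) n (x + η)
      = gonc (fun m t => (p m).eval t) Z n x :=
  gonc_add_shift Z hp0 hbin η x n
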